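/- Let D be a linear order and R ⊆ D × D a binary relation closed under the connector operation: for all 5-tuples of pairs t₁,…,t₅ ∈ R, all functions g₁, g₂ : Fin 3 → D each of which is monotone or antimonotone, and all choices of patterns p₁, p₂ ∈ {P_A, P_B} where P_A has input sequence (0,0,1,2,2) and output 0 and P_B has input sequence (0,2,1,0,2) and output 1, if for each coordinate j ∈ {1,2} and each k ∈ {1,…,5} the j-th component of t_k equals g_j applied to the k-th entry of p_j's input sequence, then the pair (g₁(output of p₁), g₂(output of p₂)) belongs to R. Then for all a₁ ≤ a₂ and b₁ ≤ b₂ in D with all four pairs in {a₁,a₂} × {b₁,b₂} contained in R, the restriction of R to the rectangle [a₁,a₂] × [b₁,b₂] is a product: setting S = { x ∈ [a₁,a₂] | ∃ y ∈ [b₁,b₂], (x,y) ∈ R } and T = { y ∈ [b₁,b₂] | ∃ x ∈ [a₁,a₂], (x,y) ∈ R }, we have R ∩ ([a₁,a₂] × [b₁,b₂]) = S × T. -/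
import Mathlib


/-- The two defining patterns of the connector polymorphism: an input sequence
in `Fin 3` of length 5 together with an output value in `Fin 3`.
`P_A = ((0,0,1,2,2), 0)` and `P_B = ((0,2,1,0,2), 1)`. -/
def connectorPatterns : Set ((Fin 5 → Fin 3) × Fin 3) :=
  {(![0, 0, 1, 2, 2], 0), (![0, 2, 1, 0, 2], 1)}

/-- A map from the pattern domain `Fin 3` to `D` that is monotone or antitone. -/
def MonoOrAnti {D : Type*} [LinearOrder D] (g : Fin 3 → D) : Prop :=
  Monotone g ∨ Antitone g

lemma mono3 {D : Type*} [Preorder D] (u v w : D) (h01 : u ≤ v) (h12 : v ≤ w) :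
    Monotone (![u, v, w] : Fin 3 → D) := by
  intro i j hij
  fin_cases i <;> fin_cases j <;>
    simp_all [Fin.le_def] <;> first | exact h01.trans h12 | omega

lemma anti3 {D : Type*} [Preorder D] (u v w : D) (h01 : v ≤ u) (h12 : w ≤ v) :
    Antitone (![u, v, w] : Fin 3 → D) := by
  intro i j hij
  fin_cases i <;> fin_cases j <;>
    simp_all [Fin.le_def] <;> first | exact h12.trans h01 | omega

lemma PA_mem : ((![0, 0, 1, 2, 2], 0) : (Fin 5 → Fin 3) × Fin 3) ∈ connectorPatterns :=
  Set.mem_insert _ _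

lemma PB_mem : ((![0, 2, 1, 0, 2], 1) : (Fin 5 → Fin 3) × Fin 3) ∈ connectorPatterns :=
  Set.mem_insert_of_mem _ rfl

/-- If `R ⊆ D × D` is closed under the connector operation, then inside any
rectangle spanned by a `2 × 2` grid of pairs of `R`, the relation `R` is a
product (a biclique). -/
theorem stmt7 {D : Type*} [LinearOrder D] (R : Set (D × D))
    (hcon : ∀ t : Fin 5 → D × D, (∀ k, t k ∈ R) →
      ∀ g₁ g₂ : Fin 3 → D, MonoOrAnti g₁ → MonoOrAnti g₂ →
      ∀ p₁ ∈ connectorPatterns, ∀ p₂ ∈ connectorPatterns,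
      (∀ k : Fin 5, (t k).1 = g₁ (p₁.1 k)) →
      (∀ k : Fin 5, (t k).2 = g₂ (p₂.1 k)) →
      (g₁ p₁.2, g₂ p₂.2) ∈ R)
    (a₁ a₂ b₁ b₂ : D) (ha : a₁ ≤ a₂) (hb : b₁ ≤ b₂)
    (h00 : (a₁, b₁) ∈ R) (h02 : (a₁, b₂) ∈ R)
    (h20 : (a₂, b₁) ∈ R) (h22 : (a₂, b₂) ∈ R) :
    R ∩ (Set.Icc a₁ a₂ ×ˢ Set.Icc b₁ b₂) =
      {x ∈ Set.Icc a₁ a₂ | ∃ y ∈ Set.Icc b₁ b₂, (x, y) ∈ R} ×ˢ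
        {y ∈ Set.Icc b₁ b₂ | ∃ x ∈ Set.Icc a₁ a₂, (x, y) ∈ R} := by
  ext ⟨x, y⟩
  constructor
  · rintro ⟨hR, hx, hy⟩
    exact ⟨⟨hx, y, hy, hR⟩, ⟨hy, x, hx, hR⟩⟩
  · rintro ⟨⟨⟨hx1, hx2⟩, y', ⟨hy'1, hy'2⟩, hxy'⟩, ⟨⟨hy1, hy2⟩, x', ⟨hx'1, hx'2⟩, hx'y⟩⟩
    refine ⟨?_, ⟨hx1, hx2⟩, ⟨hy1, hy2⟩⟩
    have hxb1 : (x, b₁) ∈ R := by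
      have := hcon ![(a₁,b₁),(a₂,b₁),(x,y'),(a₁,b₂),(a₂,b₂)]
        (by intro k; fin_cases k <;> assumption)
        ![a₁, x, a₂] ![b₁, y', b₂]
        (Or.inl (mono3 _ _ _ hx1 hx2)) (Or.inl (mono3 _ _ _ hy'1 hy'2))
        _ PB_mem _ PA_mem
        (by intro k; fin_cases k <;> rfl) (by intro k; fin_cases k <;> rfl)
      simpa using this
    have hxb2 : (x, b₂) ∈ R := by
      have := hcon ![(a₁,b₂),(a₂,b₂),(x,y'),(a₁,b₁),(a₂,b₁)]
        (by intro k; fin_cases k <;> assumption)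
        ![a₁, x, a₂] ![b₂, y', b₁]
        (Or.inl (mono3 _ _ _ hx1 hx2)) (Or.inr (anti3 _ _ _ hy'2 hy'1))
        _ PB_mem _ PA_mem
        (by intro k; fin_cases k <;> rfl) (by intro k; fin_cases k <;> rfl)
      simpa using this
    have ha2y : (a₂, y) ∈ R := by
      have := hcon ![(a₂,b₁),(a₂,b₂),(x',y),(a₁,b₁),(a₁,b₂)]
        (by intro k; fin_cases k <;> assumption)
        ![a₂, x', a₁] ![b₁, y, b₂]
        (Or.inr (anti3 _ _ _ hx'2 hx'1)) (Or.inl (mono3 _ _ _ hy1 hy2))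
        _ PA_mem _ PB_mem
        (by intro k; fin_cases k <;> rfl) (by intro k; fin_cases k <;> rfl)
      simpa using this
    have := hcon ![(x,b₁),(x,b₂),(a₂,y),(a₂,b₁),(a₂,b₂)]
      (by intro k; fin_cases k <;> assumption)
      ![x, a₂, a₂] ![b₁, y, b₂]
      (Or.inl (mono3 _ _ _ hx2 le_rfl)) (Or.inl (mono3 _ _ _ hy1 hy2))
      _ PA_mem _ PB_mem
      (by intro k; fin_cases k <;> rfl) (by intro k; fin_cases k <;> rfl)
    simpa using this
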